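/- If v ∈ ℝ and u(x) = (1/(2π)) ∫_x^∞ K₀(|ξ|·√(1 + v²/4)) exp(-(v/2)ξ) dξ denotes the on-axis profile (y = 0), then there exist constants C > 0 and γ = √(1 + v²/4) + v/2 > 0 such that u(x) ~ C·e^{-γx}/√x as x → +∞, i.e. lim_{x→+∞} u(x)·√x·e^{γx} exists and is a positive real number. -/

import Mathlib

open Real Filter Set MeasureTheory

/-- Modified Bessel function of the second kind of order 0. -/
noncomputable def K0 (r : ℝ) : ℝ := ∫ t in Ioi (0 : ℝ), Real.exp (-r * Real.cosh t)

/-- The on-axis (`y = 0`) travelling front profile. -/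
noncomputable def onAxisProfile (v x : ℝ) : ℝ :=
  (1 / (2 * π)) *
    ∫ ξ in Ioi x, K0 (|ξ| * Real.sqrt (1 + v ^ 2 / 4)) * Real.exp (-(v / 2) * ξ)

/-! With `a = √(1 + v²/4)`, inserting the integral defining `K₀` and integrating in `ξ` first
(Fubini) gives `u(x) = (1/2π) ∫₀^∞ e^{-(a cosh t + v/2) x} / (a cosh t + v/2) dt`.
The substitution `t = s/√x` turns `√x e^{γx} u(x)` into
`(1/2π) ∫₀^∞ e^{-a x (cosh (s/√x) - 1)} / (a cosh (s/√x) + v/2) ds`. Since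
`x (cosh (s/√x) - 1) ≥ s²/2` and tends to `s²/2`, dominated convergence (Laplace's method)
gives the limit `C = √(π/(2a)) / (2π γ)`. -/

open Topology

namespace FrontProfile

theorem cosh_eq_one_add_two_mul_sinh_half_sq (t : ℝ) : cosh t = 1 + 2 * sinh (t / 2) ^ 2 := by
  conv_lhs => rw [← mul_div_cancel₀ t two_ne_zero, cosh_two_mul, cosh_sq]
  ring

theorem one_add_sq_div_two_le_cosh (t : ℝ) : 1 + t ^ 2 / 2 ≤ cosh t := by
  rw [← cosh_abs, ← sq_abs, cosh_eq_one_add_two_mul_sinh_half_sq]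
  have h : |t| / 2 ≤ sinh (|t| / 2) := self_le_sinh_iff.2 (by positivity)
  nlinarith [abs_nonneg t]

theorem add_le_mul_cosh_add {a : ℝ} (ha : 0 ≤ a) (b t : ℝ) : a + b ≤ a * cosh t + b := by
  nlinarith [one_le_cosh t]

theorem tendsto_sinh_div_self : Tendsto (fun t => sinh t / t) (𝓝[≠] 0) (𝓝 1) := by
  have h := hasDerivAt_iff_tendsto_slope.1 (hasDerivAt_sinh 0)
  rw [cosh_zero] at h
  refine h.congr fun t => ?_
  simp [slope_def_field]

theorem tendsto_cosh_sub_one_div_sq :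
    Tendsto (fun u => (cosh u - 1) / u ^ 2) (𝓝[≠] 0) (𝓝 (1 / 2)) := by
  have half : Tendsto (fun u : ℝ => u / 2) (𝓝[≠] 0) (𝓝[≠] 0) :=
    tendsto_nhdsWithin_of_tendsto_nhds_of_eventually_within _
      ((continuous_id.div_const 2).tendsto' 0 0 (zero_div 2) |>.mono_left nhdsWithin_le_nhds)
      (eventually_nhdsWithin_of_forall fun u hu => div_ne_zero hu two_ne_zero)
  have h := ((tendsto_sinh_div_self.comp half).pow 2).div_const 2
  rw [one_pow] at h
  refine h.congr fun u => ?_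
  simp only [Function.comp_apply, cosh_eq_one_add_two_mul_sinh_half_sq]
  ring

theorem sq_div_two_le_mul_cosh_div_sqrt_sub_one {x : ℝ} (hx : 0 < x) (s : ℝ) :
    s ^ 2 / 2 ≤ x * (cosh (s / √x) - 1) := by
  have h := one_add_sq_div_two_le_cosh (s / √x)
  rw [div_pow, sq_sqrt hx.le] at h
  have : s ^ 2 / 2 = x * (s ^ 2 / x / 2) := by field_simp
  rw [this]
  gcongr
  linarith

theorem tendsto_mul_cosh_div_sqrt_sub_one {s : ℝ} (hs : s ≠ 0) :
    Tendsto (fun x => x * (cosh (s / √x) - 1)) atTop (𝓝 (s ^ 2 / 2)) := by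
  have hu : Tendsto (fun x => s / √x) atTop (𝓝[≠] 0) :=
    tendsto_nhdsWithin_of_tendsto_nhds_of_eventually_within _
      (tendsto_const_nhds.div_atTop tendsto_sqrt_atTop)
      (by filter_upwards [eventually_gt_atTop 0] with x hx using div_ne_zero hs (sqrt_pos.2 hx).ne')
  have h := (tendsto_cosh_sub_one_div_sq.comp hu).const_mul (s ^ 2)
  rw [mul_one_div] at h
  refine h.congr' ?_
  filter_upwards [eventually_gt_atTop 0] with x hx
  simp only [Function.comp_apply, div_pow, sq_sqrt hx.le]
  field_simp

theorem setIntegral_exp_neg_mul_Ioi {c : ℝ} (hc : 0 < c) (x : ℝ) :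
    ∫ ξ in Ioi x, exp (-(c * ξ)) = exp (-(c * x)) / c := by
  simpa [neg_div_neg_eq] using integral_exp_mul_Ioi (neg_neg_of_pos hc) x

section Laplace

variable {a b x : ℝ}

theorem integrable_exp_neg_mul_cosh_add_mul (ha : 0 < a) (hab : 0 < a + b) (hx : 0 < x) :
    Integrable (fun p : ℝ × ℝ => exp (-((a * cosh p.2 + b) * p.1)))
      ((volume.restrict (Ioi x)).prod (volume.restrict (Ioi 0))) := by
  refine Integrable.mono'
    (g := fun p : ℝ × ℝ => exp (-(a + b) * p.1) * exp (-(a * x / 2) * p.2 ^ 2))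
    ((exp_neg_integrableOn_Ioi x hab).mul_prod
      (integrable_exp_neg_mul_sq (by positivity)).restrict)
    (by fun_prop : Continuous _).aestronglyMeasurable ?_
  rw [Measure.prod_restrict]
  refine (ae_restrict_iff' (measurableSet_Ioi.prod measurableSet_Ioi)).2
    (ae_of_all _ fun p ⟨(hξ : x < p.1), _⟩ => ?_)
  rw [norm_of_nonneg (exp_pos _).le, ← exp_add, exp_le_exp]
  have h : p.2 ^ 2 / 2 * x ≤ (cosh p.2 - 1) * p.1 :=
    mul_le_mul (by linarith [one_add_sq_div_two_le_cosh p.2]) hξ.le hx.le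
      (by linarith [one_le_cosh p.2])
  nlinarith [mul_le_mul_of_nonneg_left h ha.le]

theorem setIntegral_K0_mul_exp_eq (ha : 0 < a) (hab : 0 < a + b) (hx : 0 < x) :
    ∫ ξ in Ioi x, K0 (a * ξ) * exp (-b * ξ) =
      ∫ t in Ioi 0, exp (-((a * cosh t + b) * x)) / (a * cosh t + b) := by
  have hK (ξ : ℝ) :
      K0 (a * ξ) * exp (-b * ξ) = ∫ t in Ioi 0, exp (-((a * cosh t + b) * ξ)) := by
    rw [K0, ← integral_mul_const]
    refine integral_congr_ae (ae_of_all _ fun t => ?_)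
    simp only [← exp_add]
    ring_nf
  simp_rw [hK]
  rw [integral_integral_swap (integrable_exp_neg_mul_cosh_add_mul ha hab hx)]
  refine setIntegral_congr_fun measurableSet_Ioi fun t _ => ?_
  exact setIntegral_exp_neg_mul_Ioi (hab.trans_le (add_le_mul_cosh_add ha.le b t)) x

theorem sqrt_mul_exp_mul_integral_cosh_eq (hx : 0 < x) :
    √x * exp ((a + b) * x) *
        ∫ t in Ioi 0, exp (-((a * cosh t + b) * x)) / (a * cosh t + b) =
      ∫ s in Ioi 0, exp (-(a * (x * (cosh (s / √x) - 1)))) / (a * cosh (s / √x) + b) := by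
  have hsx : 0 < √x := sqrt_pos.2 hx
  have h := integral_comp_mul_left_Ioi
    (fun t => exp (-(a * (x * (cosh t - 1)))) / (a * cosh t + b)) 0 (inv_pos.2 hsx)
  simp only [mul_zero, inv_inv, smul_eq_mul, inv_mul_eq_div] at h
  rw [h, mul_assoc, ← integral_const_mul]
  congr 1
  refine integral_congr_ae (ae_of_all _ fun t => ?_)
  simp only [mul_div_assoc', ← exp_add]
  ring_nf

theorem tendsto_integral_exp_mul_cosh_div_sqrt (ha : 0 < a) (hab : 0 < a + b) :
    Tendsto
      (fun x => ∫ s in Ioi 0,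
        exp (-(a * (x * (cosh (s / √x) - 1)))) / (a * cosh (s / √x) + b))
      atTop (𝓝 (∫ s in Ioi 0, exp (-(a / 2) * s ^ 2) / (a + b))) := by
  have hden : ∀ t, 0 < a * cosh t + b := fun t => hab.trans_le (add_le_mul_cosh_add ha.le b t)
  refine tendsto_integral_filter_of_dominated_convergence
    (fun s => exp (-(a / 2) * s ^ 2) / (a + b))
    (Eventually.of_forall fun x => (Continuous.div (by fun_prop) (by fun_prop)
      fun s => (hden _).ne').aestronglyMeasurable) ?_
    ((integrable_exp_neg_mul_sq (half_pos ha)).restrict.div_const _) ?_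
  · filter_upwards [eventually_gt_atTop 0] with x hx
    refine ae_of_all _ fun s => ?_
    rw [norm_of_nonneg (div_pos (exp_pos _) (hden _)).le]
    gcongr ?_ / ?_
    · rw [exp_le_exp]
      nlinarith [sq_div_two_le_mul_cosh_div_sqrt_sub_one hx s]
    · exact add_le_mul_cosh_add ha.le b _
  · refine (ae_restrict_iff' measurableSet_Ioi).2 (ae_of_all _ fun s (hs : 0 < s) => ?_)
    have hcosh : Tendsto (fun x => cosh (s / √x)) atTop (𝓝 1) := by
      simpa [Function.comp_def] using (continuous_cosh.tendsto 0).comp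
        (tendsto_const_nhds.div_atTop tendsto_sqrt_atTop)
    have hnum := (((tendsto_mul_cosh_div_sqrt_sub_one hs.ne').const_mul a).neg).rexp
    rw [show a * (s ^ 2 / 2) = a / 2 * s ^ 2 by ring, ← neg_mul] at hnum
    have hden' := (hcosh.const_mul a).add_const b
    rw [mul_one] at hden'
    exact hnum.div hden' hab.ne'

theorem integral_gaussian_Ioi_div :
    ∫ s in Ioi 0, exp (-(a / 2) * s ^ 2) / b = √(π / (2 * a)) / b := by
  rw [integral_div, integral_gaussian_Ioi, show π / (a / 2) = 2 ^ 2 * (π / (2 * a)) by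
    field_simp, sqrt_mul (by positivity), sqrt_sq zero_le_two]
  ring

theorem tendsto_sqrt_mul_exp_mul_integral_cosh (ha : 0 < a) (hab : 0 < a + b) :
    Tendsto
      (fun x => √x * exp ((a + b) * x) *
        ∫ t in Ioi 0, exp (-((a * cosh t + b) * x)) / (a * cosh t + b))
      atTop (𝓝 (√(π / (2 * a)) / (a + b))) := by
  rw [← integral_gaussian_Ioi_div]
  refine (tendsto_integral_exp_mul_cosh_div_sqrt ha hab).congr' ?_
  filter_upwards [eventually_gt_atTop 0] with x hx
  exact (sqrt_mul_exp_mul_integral_cosh_eq hx).symm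

end Laplace

end FrontProfile

/-- the leading front decays like `C e^{-γx}/√x` with
`γ = √(1 + v²/4) + v/2 > 0`: precisely, `u(x) √x e^{γx}` tends to a positive constant. -/
theorem stmt_19 (v : ℝ) :
    0 < Real.sqrt (1 + v ^ 2 / 4) + v / 2 ∧
    ∃ C : ℝ, 0 < C ∧
      Tendsto
        (fun x : ℝ =>
          onAxisProfile v x * Real.sqrt x *
            Real.exp ((Real.sqrt (1 + v ^ 2 / 4) + v / 2) * x))
        atTop (nhds C) := by
  set a := √(1 + v ^ 2 / 4)
  have ha : 0 < a := sqrt_pos.2 (by positivity)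
  have hab : 0 < a + v / 2 := by
    have : |v / 2| < a := (lt_sqrt (abs_nonneg _)).2 (by rw [sq_abs]; linarith)
    linarith [neg_abs_le (v / 2)]
  refine ⟨hab, √(π / (2 * a)) / (a + v / 2) / (2 * π), by positivity, ?_⟩
  refine ((FrontProfile.tendsto_sqrt_mul_exp_mul_integral_cosh ha hab).div_const (2 * π)).congr' ?_
  filter_upwards [eventually_gt_atTop 0] with x hx
  have hprofile : onAxisProfile v x = (1 / (2 * π)) *
      ∫ ξ in Ioi x, K0 (a * ξ) * exp (-(v / 2) * ξ) := by
    rw [onAxisProfile]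
    congr 1
    refine setIntegral_congr_fun measurableSet_Ioi fun ξ (hξ : x < ξ) => ?_
    rw [abs_of_pos (hx.trans hξ), mul_comm ξ]
  rw [hprofile, FrontProfile.setIntegral_K0_mul_exp_eq ha hab hx]
  ring
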